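/- arXiv:2404.00638 — 2 statements merged into one kernel-verified Lean document; each statement's English description precedes it below -/
import Mathlib

section
/- Let S ≥ 2 and K > 0, and define g(p) = (1/S)·Σ_{s=0}^{S} C(S,s)·s·( pˢ(1−p)^{S−s} + (1−p)ˢp^{S−s} )·Φ((2s−S−1)K), where Φ is the standard normal CDF. Then g(1/2) ≥ 1/2, and therefore g(p) ≥ 1/2 for all p ∈ [0,1] (since g attains its minimum at p = 1/2). -/
/-!
Write `S = n + 1`. Since `s·C(S,s) = S·C(n,s−1)`, `g S K p` is an average of `Φ((2j−n)K)`,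
`j = 0, …, n`, against weights `w j` summing to `1`. The arguments at `j` and `n − j` are opposite,
so pairing them via `Φ(x) + Φ(−x) = 1` gives `g − 1/2 = ½ ∑ (w j − w (n−j))·(Φ((2j−n)K) − 1/2)`.
Here `w j − w (n−j) = C(n,j)·(p − q)·(pʲqⁿ⁻ʲ − qʲpⁿ⁻ʲ)` with `q = 1 − p`, which has the sign of
`2j − n`, as does `Φ((2j−n)K) − 1/2`; so every term is nonnegative.
-/

/-- The standard normal CDF. -/
noncomputable def stdNormalCDF (x : ℝ) : ℝ :=
  ∫ t in Set.Iic x, (Real.sqrt (2 * Real.pi))⁻¹ * Real.exp (-t^2 / 2)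

/-- g(p) = (1/S)·Σ_{s=0}^{S} C(S,s)·s·( pˢ(1−p)^{S−s} + (1−p)ˢ p^{S−s} )·Φ((2s−S−1)K). -/
noncomputable def g (S : ℕ) (K p : ℝ) : ℝ :=
  (1 / S : ℝ) * ∑ s ∈ Finset.range (S + 1),
    (S.choose s : ℝ) * (s : ℝ) * (p^s * (1 - p)^(S - s) + (1 - p)^s * p^(S - s)) *
      stdNormalCDF ((2 * s - S - 1 : ℝ) * K)

open MeasureTheory ProbabilityTheory Finset

lemma stdNormalCDF_eq_integral_gaussianPDFReal (x : ℝ) :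
    stdNormalCDF x = ∫ t in Set.Iic x, gaussianPDFReal 0 1 t := by
  simp [stdNormalCDF, gaussianPDFReal]

lemma stdNormalCDF_add_stdNormalCDF_neg (x : ℝ) : stdNormalCDF x + stdNormalCDF (-x) = 1 := by
  have hIoi : stdNormalCDF (-x) = ∫ t in Set.Ioi x, gaussianPDFReal 0 1 t := by
    rw [stdNormalCDF_eq_integral_gaussianPDFReal, ← neg_neg x, ← integral_comp_neg_Iic, neg_neg]
    simp [gaussianPDFReal]
  rw [stdNormalCDF_eq_integral_gaussianPDFReal, hIoi, intervalIntegral.integral_Iic_add_Ioi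
    (integrable_gaussianPDFReal 0 1).integrableOn (integrable_gaussianPDFReal 0 1).integrableOn,
    integral_gaussianPDFReal_eq_one 0 one_ne_zero]

lemma stdNormalCDF_mono : Monotone stdNormalCDF := fun x y hxy => by
  simp only [stdNormalCDF_eq_integral_gaussianPDFReal]
  exact setIntegral_mono_set (integrable_gaussianPDFReal 0 1).integrableOn
    (.of_forall fun t => gaussianPDFReal_nonneg 0 1 t) (Set.Iic_subset_Iic.2 hxy).eventuallyLE

lemma stdNormalCDF_zero : stdNormalCDF 0 = 1 / 2 := by
  linarith [neg_zero (G := ℝ) ▸ stdNormalCDF_add_stdNormalCDF_neg 0]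

lemma one_half_le_stdNormalCDF {x : ℝ} (hx : 0 ≤ x) : 1 / 2 ≤ stdNormalCDF x :=
  stdNormalCDF_zero ▸ stdNormalCDF_mono hx

lemma stdNormalCDF_le_one_half {x : ℝ} (hx : x ≤ 0) : stdNormalCDF x ≤ 1 / 2 :=
  stdNormalCDF_zero ▸ stdNormalCDF_mono hx

section

variable {R : Type*} [CommRing R] [LinearOrder R] [IsStrictOrderedRing R]

/-- Pairing `j` with `n - j` turns the sum into half of `∑ (c j - c (n - j)) * a j`. -/
theorem Finset.sum_range_mul_nonneg_of_antisymm {n : ℕ} {c a : ℕ → R}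
    (ha : ∀ j ≤ n, a (n - j) = -a j) (hca : ∀ j ≤ n, 0 ≤ (c j - c (n - j)) * a j) :
    0 ≤ ∑ j ∈ range (n + 1), c j * a j := by
  have hreflect : ∑ j ∈ range (n + 1), c (n - j) * a (n - j) = ∑ j ∈ range (n + 1), c j * a j := by
    simpa using sum_range_reflect (fun j => c j * a j) (n + 1)
  have htwice : 2 * ∑ j ∈ range (n + 1), c j * a j
      = ∑ j ∈ range (n + 1), (c j - c (n - j)) * a j := by
    rw [two_mul]
    nth_rewrite 2 [← hreflect]
    rw [← sum_add_distrib]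
    refine sum_congr rfl fun j hj => ?_
    rw [ha j (Nat.lt_succ_iff.1 (mem_range.1 hj))]
    ring
  have : 0 ≤ ∑ j ∈ range (n + 1), (c j - c (n - j)) * a j :=
    sum_nonneg fun j hj => hca j (Nat.lt_succ_iff.1 (mem_range.1 hj))
  linarith

lemma sub_mul_sub_pow_nonneg {p q : R} (hp : 0 ≤ p) (hq : 0 ≤ q) (d : ℕ) :
    0 ≤ (p - q) * (p ^ d - q ^ d) := by
  rcases le_total q p with h | h
  · exact mul_nonneg (sub_nonneg.2 h) (sub_nonneg.2 (pow_le_pow_left₀ hq h d))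
  · exact mul_nonneg_of_nonpos_of_nonpos (sub_nonpos.2 h) (sub_nonpos.2 (pow_le_pow_left₀ hp h d))

lemma sub_mul_pow_mul_pow_sub_nonneg {p q : R} (hp : 0 ≤ p) (hq : 0 ≤ q) {i j : ℕ} (hij : i ≤ j) :
    0 ≤ (p - q) * (p ^ j * q ^ i - q ^ j * p ^ i) := by
  obtain ⟨d, rfl⟩ := Nat.exists_eq_add_of_le hij
  have hfactor : (p - q) * (p ^ (i + d) * q ^ i - q ^ (i + d) * p ^ i)
      = (p * q) ^ i * ((p - q) * (p ^ d - q ^ d)) := by ring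
  rw [hfactor]
  exact mul_nonneg (pow_nonneg (mul_nonneg hp hq) i) (sub_mul_sub_pow_nonneg hp hq d)

end

/-- `pairedBinomialWeight (S - 1) p (s - 1) = C(S,s)·(s/S)·(pˢ(1−p)^{S−s} + (1−p)ˢp^{S−s})`,
the weight of `Φ((2s−S−1)K)` in `g S K p`. -/
noncomputable def pairedBinomialWeight (n : ℕ) (p : ℝ) (j : ℕ) : ℝ :=
  n.choose j * (p ^ (j + 1) * (1 - p) ^ (n - j) + (1 - p) ^ (j + 1) * p ^ (n - j))

lemma sum_pairedBinomialWeight (n : ℕ) (p : ℝ) :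
    ∑ j ∈ range (n + 1), pairedBinomialWeight n p j = 1 := by
  have hsplit : ∑ j ∈ range (n + 1), pairedBinomialWeight n p j
      = p * ∑ j ∈ range (n + 1), p ^ j * (1 - p) ^ (n - j) * n.choose j
        + (1 - p) * ∑ j ∈ range (n + 1), (1 - p) ^ j * p ^ (n - j) * n.choose j := by
    rw [mul_sum, mul_sum, ← sum_add_distrib]
    exact sum_congr rfl fun j _ => by unfold pairedBinomialWeight; ring
  rw [hsplit, ← add_pow, ← add_pow]
  simp

lemma pairedBinomialWeight_sub_reflect {n j : ℕ} (hj : j ≤ n) (p : ℝ) :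
    pairedBinomialWeight n p j - pairedBinomialWeight n p (n - j)
      = n.choose j * ((p - (1 - p)) * (p ^ j * (1 - p) ^ (n - j) - (1 - p) ^ j * p ^ (n - j))) := by
  unfold pairedBinomialWeight
  rw [Nat.choose_symm hj, Nat.sub_sub_self hj]
  ring

/-- `s·C(S,s) = S·C(S−1,s−1)` removes the factor `s/S`; the `s = 0` term vanishes. -/
lemma g_succ_eq_sum (n : ℕ) (K p : ℝ) :
    g (n + 1) K p = ∑ j ∈ range (n + 1),
      pairedBinomialWeight n p j * stdNormalCDF ((2 * j - n : ℝ) * K) := by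
  unfold g pairedBinomialWeight
  rw [sum_range_succ']
  simp only [Nat.cast_zero, mul_zero, zero_mul, add_zero, Nat.succ_sub_succ]
  rw [mul_sum]
  refine sum_congr rfl fun j _ => ?_
  have hchoose : ((n + 1).choose (j + 1) : ℝ) * (j + 1) = (n + 1) * n.choose j := by
    exact_mod_cast (Nat.add_one_mul_choose_eq n j).symm
  have harg : (2 * ((j : ℝ) + 1) - ((n : ℝ) + 1) - 1) * K = (2 * j - n) * K := by ring
  push_cast
  rw [harg, hchoose]
  field_simp

lemma one_half_le_g_succ (n : ℕ) {K : ℝ} (hK : 0 ≤ K) {p : ℝ} (hp : p ∈ Set.Icc (0 : ℝ) 1) :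
    1 / 2 ≤ g (n + 1) K p := by
  have hq : 0 ≤ 1 - p := sub_nonneg.2 hp.2
  set w := pairedBinomialWeight n p
  set a : ℕ → ℝ := fun j => stdNormalCDF ((2 * j - n : ℝ) * K) - 1 / 2
  have ha : ∀ j ≤ n, a (n - j) = -a j := fun j hj => by
    have harg : (2 * ((n - j : ℕ) : ℝ) - n) * K = -((2 * j - n) * K) := by
      rw [Nat.cast_sub hj]; ring
    simp only [a, harg]
    linarith [stdNormalCDF_add_stdNormalCDF_neg ((2 * j - n : ℝ) * K)]
  have hwa : ∀ j ≤ n, 0 ≤ (w j - w (n - j)) * a j := fun j hj => by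
    rw [pairedBinomialWeight_sub_reflect hj, mul_assoc]
    refine mul_nonneg (Nat.cast_nonneg _) ?_
    rcases le_total (n - j) j with h | h
    · have hnj : (n : ℝ) ≤ 2 * j := by norm_cast; omega
      exact mul_nonneg (sub_mul_pow_mul_pow_sub_nonneg hp.1 hq h)
        (sub_nonneg.2 (one_half_le_stdNormalCDF (mul_nonneg (by linarith) hK)))
    · have hjn : (2 * j : ℝ) ≤ n := by norm_cast; omega
      have hw := sub_mul_pow_mul_pow_sub_nonneg hp.1 hq h
      exact mul_nonneg_of_nonpos_of_nonpos (by linarith)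
        (sub_nonpos.2 (stdNormalCDF_le_one_half (mul_nonpos_of_nonpos_of_nonneg (by linarith) hK)))
  calc 1 / 2 = 1 / 2 * ∑ j ∈ range (n + 1), w j := by rw [sum_pairedBinomialWeight, mul_one]
    _ ≤ 1 / 2 * ∑ j ∈ range (n + 1), w j + ∑ j ∈ range (n + 1), w j * a j :=
      le_add_of_nonneg_right (sum_range_mul_nonneg_of_antisymm ha hwa)
    _ = g (n + 1) K p := by
      rw [g_succ_eq_sum, mul_sum, ← sum_add_distrib]
      exact sum_congr rfl fun j _ => by ring

/-- g(1/2) ≥ 1/2, and g(p) ≥ 1/2 for all p ∈ [0,1]. -/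
theorem stmt_7 (S : ℕ) (hS : 2 ≤ S) (K : ℝ) (hK : 0 < K) :
    g S K (1/2) ≥ 1/2 ∧ ∀ p ∈ Set.Icc (0:ℝ) 1, g S K p ≥ 1/2 := by
  obtain ⟨n, rfl⟩ : ∃ n, S = n + 1 := ⟨S - 1, by omega⟩
  have hall : ∀ p ∈ Set.Icc (0 : ℝ) 1, g (n + 1) K p ≥ 1 / 2 :=
    fun p hp => one_half_le_g_succ n hK.le hp
  exact ⟨hall _ (by norm_num), hall⟩
end

section
/- Let S ≥ 2 and let k be an integer with S/2 ≤ k < S, and let K > 0. Then k·(Φ((2k−S+1)K) − Φ((2k−S−1)K)) + Φ((2k−S+1)K) > (S−k)·(Φ((S−2k−1)K) − Φ((S−2k−3)K)) + Φ((S−2k−3)K), where Φ is the standard normal CDF. -/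
open MeasureTheory Real Set

namespace Stmt19Aux

noncomputable def gpdf (t : ℝ) : ℝ := (Real.sqrt (2 * Real.pi))⁻¹ * Real.exp (-t^2 / 2)

lemma gpdf_pos (t : ℝ) : 0 < gpdf t :=
  mul_pos (inv_pos.2 (Real.sqrt_pos.2 (by positivity))) (Real.exp_pos _)

lemma gpdf_cont : Continuous gpdf := by
  unfold gpdf; fun_prop

lemma gpdf_int : Integrable gpdf := by
  have h : Integrable (fun t : ℝ => Real.exp (-(1/2) * t^2)) :=
    integrable_exp_neg_mul_sq (by norm_num)
  have h2 := h.const_mul (Real.sqrt (2 * Real.pi))⁻¹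
  refine h2.congr (Filter.Eventually.of_forall fun t => ?_)
  unfold gpdf; ring_nf

lemma cdf_sub (x y : ℝ) : stdNormalCDF y - stdNormalCDF x = ∫ t in x..y, gpdf t := by
  exact intervalIntegral.integral_Iic_sub_Iic (gpdf_int.integrableOn) (gpdf_int.integrableOn)

lemma cdf_lt {x y : ℝ} (h : x < y) : stdNormalCDF x < stdNormalCDF y := by
  have := intervalIntegral.intervalIntegral_pos_of_pos
    (gpdf_cont.intervalIntegrable x y) gpdf_pos h
  have h2 := cdf_sub x y
  linarith

/-- if 0 ≤ c and for all t in [x,y], 2*t ≤ c, then ∫ over [x-c, y-c] ≤ ∫ over [x,y]. -/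
lemma shift_le {x y c : ℝ} (hxy : x ≤ y) (hc : 0 ≤ c) (hyc : 2 * y ≤ c) :
    ∫ t in (x - c)..(y - c), gpdf t ≤ ∫ t in x..y, gpdf t := by
  rw [← intervalIntegral.integral_comp_sub_right gpdf c]
  apply intervalIntegral.integral_mono_on hxy
    ((gpdf_cont.comp (by continuity)).intervalIntegrable x y)
    (gpdf_cont.intervalIntegrable x y)
  intro t ht
  unfold gpdf
  have h1 : t^2 ≤ (t - c)^2 := by nlinarith [ht.2]
  exact mul_le_mul_of_nonneg_left (Real.exp_le_exp.mpr (by linarith))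
    (le_of_lt (inv_pos.2 (Real.sqrt_pos.2 (by positivity))))

end Stmt19Aux

open Stmt19Aux in
/-- for S ≥ 2, an integer k with S/2 ≤ k < S, and K > 0,
k·(Φ((2k−S+1)K) − Φ((2k−S−1)K)) + Φ((2k−S+1)K)
> (S−k)·(Φ((S−2k−1)K) − Φ((S−2k−3)K)) + Φ((S−2k−3)K). -/
theorem stmt_19 (S : ℕ) (hS : 2 ≤ S) (k : ℕ) (hk1 : (S : ℝ)/2 ≤ (k : ℝ))
    (hk2 : k < S) (K : ℝ) (hK : 0 < K) :
    (k : ℝ) * (stdNormalCDF ((2 * k - S + 1 : ℝ) * K)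
        - stdNormalCDF ((2 * k - S - 1 : ℝ) * K))
      + stdNormalCDF ((2 * k - S + 1 : ℝ) * K)
    > ((S : ℝ) - k) * (stdNormalCDF (((S : ℝ) - 2 * k - 1) * K)
        - stdNormalCDF (((S : ℝ) - 2 * k - 3) * K))
      + stdNormalCDF (((S : ℝ) - 2 * k - 3) * K) := by
  set a : ℝ := 2 * (k : ℝ) - (S : ℝ) with ha
  have ha0 : 0 ≤ a := by simp [ha]; linarith
  -- endpoints
  have hA0 : (2 * (k:ℝ) - S - 1) * K = (a - 1) * K := by ring
  have hA1 : (2 * (k:ℝ) - S + 1) * K = (a + 1) * K := by ring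
  have hB0 : ((S:ℝ) - 2 * k - 3) * K = (a - 1) * K - (2*a + 2) * K := by ring
  have hB1 : ((S:ℝ) - 2 * k - 1) * K = (a + 1) * K - (2*a + 2) * K := by ring
  rw [hA0, hA1, hB0, hB1]
  have hc0 : 0 ≤ (2*a + 2) * K := by positivity
  have hxy : (a - 1) * K ≤ (a + 1) * K := by nlinarith
  -- Δ2 ≤ Δ1
  have hΔ : stdNormalCDF ((a + 1) * K - (2*a + 2) * K)
      - stdNormalCDF ((a - 1) * K - (2*a + 2) * K)
      ≤ stdNormalCDF ((a + 1) * K) - stdNormalCDF ((a - 1) * K) := by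
    rw [cdf_sub, cdf_sub]
    exact shift_le hxy hc0 (by nlinarith)
  -- Δ1, Δ2 ≥ 0
  have hΔ2 : 0 ≤ stdNormalCDF ((a + 1) * K - (2*a + 2) * K)
      - stdNormalCDF ((a - 1) * K - (2*a + 2) * K) := by
    have := cdf_lt (show (a - 1) * K - (2*a + 2) * K < (a + 1) * K - (2*a + 2) * K by nlinarith)
    linarith
  -- strict: Φ(B0) < Φ(A1)
  have hstrict : stdNormalCDF ((a - 1) * K - (2*a + 2) * K) < stdNormalCDF ((a + 1) * K) :=
    cdf_lt (by nlinarith)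
  have hkSk : (S : ℝ) - k ≤ (k : ℝ) := by linarith
  have hSk0 : 0 ≤ (S : ℝ) - k := by
    have := hk2.le
    exact sub_nonneg.2 (by exact_mod_cast this)
  nlinarith [hΔ, hΔ2, hstrict, hkSk, hSk0]
end
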